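/- arXiv:math/0511330 — 6 statements merged into one kernel-verified Lean document; each statement's English description precedes it below -/
import Mathlib

section
/- Fix a finitely splitting tree T_max ⊆ ω^{<ω} and a monotone norm μ assigning a non-negative real to each set of immediate successors of each node, with singletons of norm < 1, such that along every branch b of T_max, limsup_n μ(SUCC(b↾n)) = ∞. Define Q to be the set of subtrees T of T_max such that along every branch b of T, limsup_n μ(SUCC_T(b↾n)) = ∞. Then a subtree T of T_max belongs to Q if and only if for every n ∈ ℕ, T is n-dense, i.e., there is a front F of T with μ(SUCC_T(t)) > n for every t ∈ F. -/
namespace Sacch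

/-- The length-`n` initial segment of an infinite sequence, as a list. -/
def restr (b : ℕ → ℕ) (n : ℕ) : List ℕ := List.ofFn fun i : Fin n => b i

/-- A tree on ω: a set of finite sequences closed under initial segments. -/
def IsTree (T : Set (List ℕ)) : Prop :=
  ∀ s t : List ℕ, s <+: t → t ∈ T → s ∈ T

/-- The set of immediate successors of `t` in `T`. -/
def succs (T : Set (List ℕ)) (t : List ℕ) : Set (List ℕ) :=
  {s | s ∈ T ∧ ∃ k : ℕ, s = t ++ [k]}

/-- `T` is finitely splitting: every node has finitely many immediate successors. -/
def FinSplit (T : Set (List ℕ)) : Prop :=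
  ∀ t ∈ T, (succs T t).Finite

/-- `b` is a chain in `T`: a pairwise `≼`-comparable subset of `T`. -/
def IsChainIn (T b : Set (List ℕ)) : Prop :=
  b ⊆ T ∧ ∀ s ∈ b, ∀ t ∈ b, s <+: t ∨ t <+: s

/-- `b` is a branch of `T`: a maximal chain. -/
def IsBranch (T b : Set (List ℕ)) : Prop :=
  IsChainIn T b ∧ ∀ b', IsChainIn T b' → b ⊆ b' → b' = b

/-- `A` is an antichain: pairwise `≼`-incomparable. -/
def IsAntichainIn (A : Set (List ℕ)) : Prop :=
  ∀ s ∈ A, ∀ t ∈ A, s ≠ t → ¬(s <+: t ∨ t <+: s)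

/-- `F` is a front of `T`: an antichain in `T` meeting every branch of `T`. -/
def IsFront (T F : Set (List ℕ)) : Prop :=
  F ⊆ T ∧ IsAntichainIn F ∧ ∀ b, IsBranch T b → ∃ t ∈ b, t ∈ F

/-- The norm `μ_T(t)` of a node `t` in a subtree `T`: the `μ`-value of its
set of immediate `T`-successors. -/
noncomputable def normOf (μ : List ℕ → Set (List ℕ) → ℝ)
    (T : Set (List ℕ)) (t : List ℕ) : ℝ := μ t (succs T t)

/-- Along the branch `b` of `T`, `limsup μ_T(b ↾ n) = ∞`. -/
def BranchLimsupInf (μ : List ℕ → Set (List ℕ) → ℝ)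
    (T b : Set (List ℕ)) : Prop :=
  ∀ m : ℝ, ∀ N : ℕ, ∃ t ∈ b, N ≤ t.length ∧ m < normOf μ T t

/-- The standing assumptions on `(Tmax, μ)` making a finitely splitting
lim-sup tree forcing: `Tmax` is a nonempty finitely splitting tree, `μ`
assigns non-negative reals monotonically to sets of successors, singletons
have norm `< 1` and along every branch of `Tmax` the limsup of the norms
is infinite. -/
structure LimSupForcing (Tmax : Set (List ℕ))
    (μ : List ℕ → Set (List ℕ) → ℝ) : Prop where
  tree : IsTree Tmax
  nonempty : Tmax.Nonempty
  finSplit : FinSplit Tmax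
  mono : ∀ t : List ℕ, ∀ A B : Set (List ℕ), A ⊆ B → μ t A ≤ μ t B
  nonneg : ∀ t A, 0 ≤ μ t A
  singleton_lt_one : ∀ t s : List ℕ, μ t {s} < 1
  limsup : ∀ b, IsBranch Tmax b → BranchLimsupInf μ Tmax b

/-- `T ∈ Q`: `T` is a condition of the lim-sup tree forcing `Q = Q(Tmax, μ)`,
i.e. a nonempty subtree of `Tmax` along each of whose branches the limsup of
the norms is infinite. -/
def memQ (Tmax : Set (List ℕ)) (μ : List ℕ → Set (List ℕ) → ℝ)
    (T : Set (List ℕ)) : Prop :=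
  T.Nonempty ∧ T ⊆ Tmax ∧ IsTree T ∧
    ∀ b, IsBranch T b → BranchLimsupInf μ T b

/-- `T` is `n`-dense: there is a front of `T` all of whose nodes have
norm `> n`. -/
def nDense (μ : List ℕ → Set (List ℕ) → ℝ) (T : Set (List ℕ)) (n : ℕ) : Prop :=
  ∃ F, IsFront T F ∧ ∀ t ∈ F, (n : ℝ) < normOf μ T t

end Sacch

namespace Sacch

theorem IsBranch.mem_of_prefix {T b : Set (List ℕ)} (hT : IsTree T) (hb : IsBranch T b)
    {s t : List ℕ} (hst : s <+: t) (ht : t ∈ b) : s ∈ b := by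
  have hcomp : ∀ w ∈ b, s <+: w ∨ w <+: s := fun w hw =>
    (hb.1.2 w hw t ht).elim (List.prefix_or_prefix_of_prefix hst) fun hwt => .inl (hst.trans hwt)
  have hchain : IsChainIn T (insert s b) := by
    refine ⟨Set.insert_subset (hT s t hst (hb.1.1 ht)) hb.1.1, ?_⟩
    rintro u (rfl | hu) v (rfl | hv)
    · exact .inl (List.prefix_refl _)
    · exact hcomp v hv
    · exact (hcomp u hu).symm
    · exact hb.1.2 u hu v hv
  exact hb.2 _ hchain (Set.subset_insert s b) ▸ Set.mem_insert s b

theorem IsChainIn.finite_setOf_length_lt {T b : Set (List ℕ)} (hb : IsChainIn T b) (N : ℕ) :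
    {s ∈ b | s.length < N}.Finite := by
  have hinj : Set.InjOn List.length {s ∈ b | s.length < N} := fun u hu v hv huv =>
    (hb.2 u hu.1 v hv.1).elim (·.eq_of_length huv) fun hvu => (hvu.eq_of_length huv.symm).symm
  exact Set.Finite.of_finite_image ((Set.finite_Iio N).subset (by rintro _ ⟨s, hs, rfl⟩; exact hs.2))
    hinj

def minimalNodes (T : Set (List ℕ)) (P : List ℕ → Prop) : Set (List ℕ) :=
  {t | t ∈ T ∧ P t ∧ ∀ s, s <+: t → s ≠ t → ¬P s}

theorem isAntichainIn_minimalNodes (T : Set (List ℕ)) (P : List ℕ → Prop) :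
    IsAntichainIn (minimalNodes T P) := by
  rintro s hs t ht hne (hst | hts)
  · exact ht.2.2 s hst hne hs.2.1
  · exact hs.2.2 t hts hne.symm ht.2.1

theorem exists_minimal_prefix {P : List ℕ → Prop} {t : List ℕ} (ht : P t) :
    ∃ s, s <+: t ∧ P s ∧ ∀ r, r <+: s → r ≠ s → ¬P r := by
  obtain ⟨s, ⟨hst, hs⟩, hmin⟩ :=
    (measure List.length).wf.has_min {s | s <+: t ∧ P s} ⟨t, List.prefix_refl t, ht⟩
  refine ⟨s, hst, hs, fun r hrs hne hr => hmin r ⟨hrs.trans hst, hr⟩ ?_⟩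
  exact lt_of_le_of_ne hrs.length_le fun hlen => hne (hrs.eq_of_length hlen)

theorem isFront_minimalNodes {T : Set (List ℕ)} (hT : IsTree T) {P : List ℕ → Prop}
    (hP : ∀ b, IsBranch T b → ∃ t ∈ b, P t) : IsFront T (minimalNodes T P) := by
  refine ⟨fun t ht => ht.1, isAntichainIn_minimalNodes T P, fun b hb => ?_⟩
  obtain ⟨t, htb, ht⟩ := hP b hb
  obtain ⟨s, hst, hs, hmin⟩ := exists_minimal_prefix ht
  have hsb : s ∈ b := IsBranch.mem_of_prefix hT hb hst htb
  exact ⟨s, hsb, hb.1.1 hsb, hs, hmin⟩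

theorem nDense_of_branchLimsupInf {μ : List ℕ → Set (List ℕ) → ℝ} {T : Set (List ℕ)}
    (hT : IsTree T) (hlim : ∀ b, IsBranch T b → BranchLimsupInf μ T b) (n : ℕ) :
    nDense μ T n := by
  refine ⟨minimalNodes T fun t => (n : ℝ) < normOf μ T t, isFront_minimalNodes hT fun b hb => ?_,
    fun t ht => ht.2.1⟩
  obtain ⟨t, htb, -, ht⟩ := hlim b hb n 0
  exact ⟨t, htb, ht⟩

/-- The finitely many nodes of `b` below height `N` have bounded norm, so a front of norm beyond
that bound meets `b` at height at least `N`. -/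
theorem IsBranch.branchLimsupInf {μ : List ℕ → Set (List ℕ) → ℝ} {T b : Set (List ℕ)}
    (hb : IsBranch T b) (hdense : ∀ n : ℕ, nDense μ T n) : BranchLimsupInf μ T b := by
  intro m N
  obtain ⟨M, hM⟩ := ((IsChainIn.finite_setOf_length_lt hb.1 N).image (normOf μ T)).bddAbove
  obtain ⟨n, hn⟩ := exists_nat_gt (max m M)
  obtain ⟨F, hF, hFnorm⟩ := hdense n
  obtain ⟨t, htb, htF⟩ := hF.2.2 b hb
  have hnt : max m M < normOf μ T t := hn.trans (hFnorm t htF)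
  refine ⟨t, htb, not_lt.mp fun hlen => ?_, (le_max_left m M).trans_lt hnt⟩
  exact (hM ⟨t, ⟨htb, hlen⟩, rfl⟩).not_gt ((le_max_right m M).trans_lt hnt)

end Sacch

open Sacch in
theorem memQ_iff_nDense_general (Tmax : Set (List ℕ)) (μ : List ℕ → Set (List ℕ) → ℝ)
    (T : Set (List ℕ)) :
    memQ Tmax μ T ↔
      (T.Nonempty ∧ T ⊆ Tmax ∧ IsTree T ∧ ∀ n : ℕ, nDense μ T n) := by
  constructor
  · rintro ⟨hne, hsub, hT, hlim⟩
    exact ⟨hne, hsub, hT, nDense_of_branchLimsupInf hT hlim⟩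
  · rintro ⟨hne, hsub, hT, hdense⟩
    exact ⟨hne, hsub, hT, fun b hb => IsBranch.branchLimsupInf hb hdense⟩

open Sacch in
/-- A subtree `T` of `Tmax` belongs to the lim-sup tree forcing `Q` iff it is
`n`-dense for every `n`: there is a front of `T` all of whose nodes have
`μ_T`-norm `> n`. -/
theorem memQ_iff_nDense (Tmax : Set (List ℕ)) (μ : List ℕ → Set (List ℕ) → ℝ)
    (h : LimSupForcing Tmax μ) (T : Set (List ℕ)) :
    memQ Tmax μ T ↔
      (T.Nonempty ∧ T ⊆ Tmax ∧ IsTree T ∧ ∀ n : ℕ, nDense μ T n) :=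
  memQ_iff_nDense_general Tmax μ T
end

section
/- With Q a finitely splitting lim-sup tree forcing, the union of finitely many elements of Q is again an element of Q. -/
/-!
Conditions in `Q` have no leaves, since the prefixes of a leaf would form a branch of bounded
length. Hence a branch of a union of finitely many conditions contains arbitrarily long nodes, so by
pigeonhole some tree `T i` contains arbitrarily long nodes of it; being closed under initial
segments, `T i` then contains the whole branch, which is therefore a branch of `T i`. Along it the
norms computed in `T i` have infinite limsup, and norms only grow when passing to the union,
since `μ` is monotone and a node has more successors in the union.
-/

namespace Sacch

def IsPruned (T : Set (List ℕ)) : Prop :=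
  ∀ t ∈ T, ∃ u ∈ T, t <+: u ∧ t.length < u.length

theorem IsTree.biUnion {ι : Type*} {s : Set ι} {T : ι → Set (List ℕ)}
    (hT : ∀ i ∈ s, IsTree (T i)) : IsTree (⋃ i ∈ s, T i) := by
  intro u v huv hv
  obtain ⟨i, hi, hvi⟩ := Set.mem_iUnion₂.mp hv
  exact Set.mem_biUnion hi (hT i hi u v huv hvi)

theorem IsPruned.biUnion {ι : Type*} {s : Set ι} {T : ι → Set (List ℕ)}
    (hT : ∀ i ∈ s, IsPruned (T i)) : IsPruned (⋃ i ∈ s, T i) := by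
  intro t ht
  obtain ⟨i, hi, hti⟩ := Set.mem_iUnion₂.mp ht
  obtain ⟨u, hu, htu, hlen⟩ := hT i hi t hti
  exact ⟨u, Set.mem_biUnion hi hu, htu, hlen⟩

theorem succs_mono {T S : Set (List ℕ)} (hTS : T ⊆ S) (t : List ℕ) : succs T t ⊆ succs S t :=
  fun _ hu => ⟨hTS hu.1, hu.2⟩

theorem BranchLimsupInf.mono {μ : List ℕ → Set (List ℕ) → ℝ}
    (hμ : ∀ t : List ℕ, ∀ A B : Set (List ℕ), A ⊆ B → μ t A ≤ μ t B) {T S b : Set (List ℕ)}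
    (hb : BranchLimsupInf μ T b) (hTS : T ⊆ S) : BranchLimsupInf μ S b := by
  intro m N
  obtain ⟨t, htb, hlen, hnorm⟩ := hb m N
  exact ⟨t, htb, hlen, hnorm.trans_le (hμ t _ _ (succs_mono hTS t))⟩

theorem IsBranch.of_subset {S T b : Set (List ℕ)} (hb : IsBranch S b) (hbT : b ⊆ T)
    (hTS : T ⊆ S) : IsBranch T b :=
  ⟨⟨hbT, hb.1.2⟩, fun b' hb' => hb.2 b' ⟨hb'.1.trans hTS, hb'.2⟩⟩

theorem IsBranch.nonempty {T b : Set (List ℕ)} (hb : IsBranch T b) (hT : T.Nonempty) :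
    b.Nonempty := by
  obtain ⟨t, ht⟩ := hT
  by_contra hbe
  rw [Set.not_nonempty_iff_eq_empty] at hbe
  have hchain : IsChainIn T {t} :=
    ⟨Set.singleton_subset_iff.mpr ht, by
      rintro _ rfl _ rfl
      exact Or.inl List.prefix_rfl⟩
  exact Set.singleton_ne_empty t (hbe ▸ hb.2 {t} hchain (hbe ▸ Set.empty_subset _))

theorem isBranch_setOf_prefix {T : Set (List ℕ)} (hT : IsTree T) {t : List ℕ} (ht : t ∈ T)
    (hleaf : ∀ u ∈ T, t <+: u → u.length ≤ t.length) : IsBranch T {v | v <+: t} := by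
  refine ⟨⟨fun v hv => hT v t hv ht, fun u hu v hv => List.prefix_or_prefix_of_prefix hu hv⟩, ?_⟩
  intro b' hb' hsub
  refine Set.Subset.antisymm (fun u hu => ?_) hsub
  rcases hb'.2 u hu t (hsub List.prefix_rfl) with hut | htu
  · exact hut
  · exact (htu.eq_of_length_le (hleaf u (hb'.1 hu) htu)).symm ▸ List.prefix_rfl

theorem IsPruned.of_forall_isBranch {μ : List ℕ → Set (List ℕ) → ℝ} {T : Set (List ℕ)}
    (hT : IsTree T) (hbr : ∀ b, IsBranch T b → BranchLimsupInf μ T b) : IsPruned T := by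
  intro t ht
  by_contra! hleaf
  obtain ⟨v, hv, hlen, -⟩ :=
    hbr _ (isBranch_setOf_prefix hT ht hleaf) 0 (t.length + 1)
  have : v.length ≤ t.length := List.IsPrefix.length_le hv
  omega

theorem memQ.isPruned {Tmax : Set (List ℕ)} {μ : List ℕ → Set (List ℕ) → ℝ} {T : Set (List ℕ)}
    (hT : memQ Tmax μ T) : IsPruned T :=
  IsPruned.of_forall_isBranch hT.2.2.1 hT.2.2.2

theorem IsChainIn.exists_forall_prefix {T b : Set (List ℕ)} (hb : IsChainIn T b)
    (hne : b.Nonempty) {M : ℕ} (hM : ∀ v ∈ b, v.length ≤ M) : ∃ t ∈ b, ∀ v ∈ b, v <+: t := by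
  have hbdd : BddAbove (List.length '' b) := ⟨M, by rintro _ ⟨v, hv, rfl⟩; exact hM v hv⟩
  obtain ⟨t, htb, htlen⟩ := Nat.sSup_mem (hne.image _) hbdd
  refine ⟨t, htb, fun v hv => ?_⟩
  rcases hb.2 v hv t htb with hvt | htv
  · exact hvt
  · have hle : v.length ≤ t.length := htlen ▸ le_csSup hbdd ⟨v, hv, rfl⟩
    exact (htv.eq_of_length_le hle).symm ▸ List.prefix_rfl

theorem IsBranch.exists_length_ge {T b : Set (List ℕ)} (hb : IsBranch T b) (hT : IsPruned T)
    (hne : T.Nonempty) (N : ℕ) : ∃ t ∈ b, N ≤ t.length := by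
  by_contra! hshort
  obtain ⟨t, htb, hprefix⟩ :=
    hb.1.exists_forall_prefix (hb.nonempty hne) fun v hv => (hshort v hv).le
  obtain ⟨u, hu, htu, hlen⟩ := hT t (hb.1.1 htb)
  have hchain : IsChainIn T (insert u b) := by
    refine ⟨Set.insert_subset hu hb.1.1, ?_⟩
    rintro v (rfl | hv) w (rfl | hw)
    · exact Or.inl List.prefix_rfl
    · exact Or.inr ((hprefix w hw).trans htu)
    · exact Or.inl ((hprefix v hv).trans htu)
    · exact hb.1.2 v hv w hw
  have hub : u ∈ b := hb.2 _ hchain (Set.subset_insert u b) ▸ Set.mem_insert u b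
  have := (hprefix u hub).length_le
  omega

theorem IsChainIn.subset_of_forall_exists_length_ge {T S b : Set (List ℕ)} (hb : IsChainIn T b)
    (hS : IsTree S) (hcof : ∀ N : ℕ, ∃ t ∈ b, t ∈ S ∧ N ≤ t.length) : b ⊆ S := by
  intro u hu
  obtain ⟨t, htb, htS, hlen⟩ := hcof u.length
  rcases hb.2 u hu t htb with hut | htu
  · exact hS u t hut htS
  · exact (htu.eq_of_length_le hlen) ▸ htS

end Sacch

theorem Finset.exists_forall_exists_le_of_subset_biUnion {α ι : Type*} (f : α → ℕ) {b : Set α}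
    {s : Finset ι} {T : ι → Set α} (hb : b ⊆ ⋃ i ∈ s, T i) (hunb : ∀ N, ∃ x ∈ b, N ≤ f x) :
    ∃ i ∈ s, ∀ N, ∃ x ∈ b, x ∈ T i ∧ N ≤ f x := by
  by_contra! hbdd
  choose! M hM using hbdd
  obtain ⟨x, hxb, hx⟩ := hunb (s.sup M)
  obtain ⟨i, hi, hxi⟩ := Set.mem_iUnion₂.mp (hb hxb)
  exact (hM i hi x hxb hxi).not_ge ((Finset.le_sup hi).trans hx)

open Sacch in
/-- The union of finitely many elements of `Q` is again an element of `Q`. -/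
theorem memQ_finite_union (Tmax : Set (List ℕ)) (μ : List ℕ → Set (List ℕ) → ℝ)
    (h : LimSupForcing Tmax μ) {ι : Type} (s : Finset ι) (hs : s.Nonempty)
    (T : ι → Set (List ℕ)) (hT : ∀ i ∈ s, memQ Tmax μ (T i)) :
    memQ Tmax μ (⋃ i ∈ s, T i) := by
  have hTU : ∀ i ∈ s, T i ⊆ ⋃ i ∈ s, T i := fun i hi => Set.subset_biUnion_of_mem hi
  have hne : (⋃ i ∈ s, T i).Nonempty :=
    let ⟨i, hi⟩ := hs
    (hT i hi).1.mono (hTU i hi)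
  refine ⟨hne, Set.iUnion₂_subset fun i hi => (hT i hi).2.1,
    IsTree.biUnion fun i hi => (hT i hi).2.2.1, fun b hb => ?_⟩
  have hlong := hb.exists_length_ge (IsPruned.biUnion fun i hi => (hT i hi).isPruned) hne
  obtain ⟨i, hi, hcof⟩ := s.exists_forall_exists_le_of_subset_biUnion List.length hb.1.1 hlong
  have hbi : IsBranch (T i) b :=
    hb.of_subset (hb.1.subset_of_forall_exists_length_ge (hT i hi).2.2.1 hcof) (hTU i hi)
  exact ((hT i hi).2.2.2 b hbi).mono h.mono (hTU i hi)
end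

section
/- Let Q be a finitely splitting lim-sup tree forcing. If (T_i)_{i∈ω} is a ⊇-decreasing sequence in Q and (F_n)_{n∈ω} is a front-sequence such that F_i is a front in T_i for all i, then the tree lim(F̄) := {t ∈ T_max : ∃i, t ≼ s for some s ∈ F_i} is an element of Q and is a subtree of each T_i (fusion). -/
namespace Sacch

/-- The downward closure of a set of nodes. -/
def cldn (F : Set (List ℕ)) : Set (List ℕ) := {t | ∃ s ∈ F, t <+: s}

/-- `F'` is stronger than `F`: every element of `F'` extends some element
of `F`. -/
def Stronger (F' F : Set (List ℕ)) : Prop :=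
  ∀ t ∈ F', ∃ s ∈ F, s <+: t

/-- `F'` is purely stronger than `F`: it is stronger, and moreover every
element of `F` is extended by some element of `F'`. -/
def PurelyStronger (F' F : Set (List ℕ)) : Prop :=
  Stronger F' F ∧ ∀ s ∈ F, ∃ t ∈ F', s <+: t

/-- The finite antichain `F` is `n`-dense: the finite tree `cldn F` has a
front all of whose nodes have norm `> n` (computed in `cldn F`). -/
def DenseAntichain (μ : List ℕ → Set (List ℕ) → ℝ) (n : ℕ)
    (F : Set (List ℕ)) : Prop :=
  ∃ F', F' ⊆ cldn F ∧ IsAntichainIn F' ∧ (∀ s ∈ F, ∃ t ∈ F', t <+: s) ∧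
    ∀ t ∈ F', (n : ℝ) < normOf μ (cldn F) t

/-- `F` is a front-sequence: a sequence of finite nonempty antichains in
`Tmax` such that `F (n+1)` is `n`-dense and purely stronger than `F n`. -/
def FrontSeq (Tmax : Set (List ℕ)) (μ : List ℕ → Set (List ℕ) → ℝ)
    (F : ℕ → Set (List ℕ)) : Prop :=
  ∀ n : ℕ, (F n).Finite ∧ (F n).Nonempty ∧ F n ⊆ Tmax ∧ IsAntichainIn (F n) ∧
    DenseAntichain μ n (F (n + 1)) ∧ PurelyStronger (F (n + 1)) (F n)

/-- The limit tree of a front-sequence: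
`lim(F̄) = {t ∈ Tmax : ∃ i ∃ s ∈ F i, t ≼ s}`. -/
def limFront (Tmax : Set (List ℕ)) (F : ℕ → Set (List ℕ)) : Set (List ℕ) :=
  {t | t ∈ Tmax ∧ ∃ i : ℕ, ∃ s ∈ F i, t <+: s}

end Sacch

/-!
A branch `b` of `lim(F̄)` meets every `F i`: each node of `lim(F̄)` is comparable with a node
of the finite set `F i`, so if `b` avoided `F i`, the longest of finitely many witnesses in `b`
would be extended by an element of `F i` comparable with all of `b`, contradicting maximality.
Taking `i = n + 1`, the `n`-density of `F (n + 1)` yields a node of `b` whose norm in the finite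
tree `cldn (F (n + 1)) ⊆ lim(F̄)`, hence by monotonicity of `μ` also in `lim(F̄)`, exceeds `n`.
Since a chain has only finitely many nodes below any given length, these norms witness the
infinite limsup.
-/

namespace Sacch

section Branch

variable {L b : Set (List ℕ)}

lemma IsBranch.mem_of_comparable (hb : IsBranch L b) {u : List ℕ} (hu : u ∈ L)
    (hcomp : ∀ t ∈ b, u <+: t ∨ t <+: u) : u ∈ b := by
  have hchain : IsChainIn L (insert u b) := by
    refine ⟨Set.insert_subset hu hb.1.1, ?_⟩
    rintro x (rfl | hx) y (rfl | hy)
    · exact Or.inl (List.prefix_refl _)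
    · exact hcomp y hy
    · exact (hcomp x hx).symm
    · exact hb.1.2 x hx y hy
  exact hb.2 _ hchain (Set.subset_insert u b) ▸ Set.mem_insert u b

lemma IsBranch.mem_of_prefix_s6 (hL : IsTree L) (hb : IsBranch L b) {t u : List ℕ}
    (ht : t ∈ b) (hut : u <+: t) : u ∈ b := by
  refine hb.mem_of_comparable (hL u t hut (hb.1.1 ht)) fun x hx => ?_
  rcases hb.1.2 t ht x hx with htx | hxt
  · exact Or.inl (hut.trans htx)
  · exact List.prefix_or_prefix_of_prefix hut hxt

lemma IsBranch.exists_mem_of_finite (hL : IsTree L) (hb : IsBranch L b) {A : Set (List ℕ)}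
    (hAL : A ⊆ L) (hA : A.Finite) (hAne : A.Nonempty)
    (hcomp : ∀ t ∈ L, ∃ w ∈ A, w <+: t ∨ t <+: w) : ∃ w ∈ b, w ∈ A := by
  by_contra! hdisj
  have hwit : ∀ w ∈ A, ∃ t ∈ b, ¬t <+: w := by
    intro w hw
    by_contra! hpre
    exact hdisj w (hb.mem_of_comparable (hAL hw) fun t ht => Or.inr (hpre t ht)) hw
  choose! f hfb hfw using hwit
  obtain ⟨w₀, hw₀, hmax⟩ := Set.exists_max_image A (fun w => (f w).length) hA hAne
  obtain ⟨w₁, hw₁, hw₁t | htw₁⟩ := hcomp (f w₀) (hb.1.1 (hfb w₀ hw₀))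
  · exact hdisj w₁ (hb.mem_of_prefix_s6 hL (hfb w₀ hw₀) hw₁t) hw₁
  · have hle : f w₁ <+: f w₀ := by
      rcases hb.1.2 _ (hfb w₁ hw₁) _ (hfb w₀ hw₀) with h | h
      · exact h
      · exact h.eq_of_length_le (hmax w₁ hw₁) ▸ List.prefix_refl _
    exact hfw w₁ hw₁ (hle.trans htw₁)

lemma IsChainIn.finite_length_lt {T : Set (List ℕ)} (hb : IsChainIn T b) (N : ℕ) :
    {t | t ∈ b ∧ t.length < N}.Finite := by
  refine Set.Finite.of_finite_image (f := List.length) ((Set.finite_Iio N).subset ?_)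
    fun x hx y hy hxy => ?_
  · rintro _ ⟨t, ⟨-, hN⟩, rfl⟩
    exact hN
  · rcases hb.2 x hx.1 y hy.1 with h | h
    · exact h.eq_of_length hxy
    · exact (h.eq_of_length hxy.symm).symm

lemma branchLimsupInf_of_forall_exists_lt {μ : List ℕ → Set (List ℕ) → ℝ}
    {T : Set (List ℕ)} (hb : IsChainIn T b) (hunb : ∀ n : ℕ, ∃ t ∈ b, (n : ℝ) < normOf μ T t) :
    BranchLimsupInf μ T b := by
  intro m N
  obtain ⟨M, hM⟩ := ((hb.finite_length_lt N).image (normOf μ T)).bddAbove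
  obtain ⟨n, hn⟩ := exists_nat_gt (max m M)
  obtain ⟨t, htb, htn⟩ := hunb n
  refine ⟨t, htb, ?_, (le_max_left m M).trans_lt (hn.trans htn)⟩
  by_contra! hlen
  have : normOf μ T t ≤ M := hM ⟨t, ⟨htb, hlen⟩, rfl⟩
  linarith [le_max_right m M]

end Branch

lemma normOf_mono {μ : List ℕ → Set (List ℕ) → ℝ}
    (hmono : ∀ t : List ℕ, ∀ A B : Set (List ℕ), A ⊆ B → μ t A ≤ μ t B)
    {S T : Set (List ℕ)} (hST : S ⊆ T) (t : List ℕ) : normOf μ S t ≤ normOf μ T t :=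
  hmono t _ _ fun _ hx => ⟨hST hx.1, hx.2⟩

lemma PurelyStronger.refl (F : Set (List ℕ)) : PurelyStronger F F :=
  ⟨fun t ht => ⟨t, ht, List.prefix_refl t⟩, fun s hs => ⟨s, hs, List.prefix_refl s⟩⟩

lemma PurelyStronger.trans {F₁ F₂ F₃ : Set (List ℕ)} (h₃₂ : PurelyStronger F₃ F₂)
    (h₂₁ : PurelyStronger F₂ F₁) : PurelyStronger F₃ F₁ := by
  refine ⟨fun t ht => ?_, fun s hs => ?_⟩
  · obtain ⟨u, hu, hut⟩ := h₃₂.1 t ht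
    obtain ⟨s, hs, hsu⟩ := h₂₁.1 u hu
    exact ⟨s, hs, hsu.trans hut⟩
  · obtain ⟨u, hu, hsu⟩ := h₂₁.2 s hs
    obtain ⟨t, ht, hut⟩ := h₃₂.2 u hu
    exact ⟨t, ht, hsu.trans hut⟩

section FrontSeq

variable {Tmax : Set (List ℕ)} {μ : List ℕ → Set (List ℕ) → ℝ} {F : ℕ → Set (List ℕ)}

lemma FrontSeq.purelyStronger (hFS : FrontSeq Tmax μ F) {i j : ℕ} (hij : i ≤ j) :
    PurelyStronger (F j) (F i) := by
  induction j, hij using Nat.le_induction with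
  | base => exact PurelyStronger.refl _
  | succ j _ ih => exact (hFS j).2.2.2.2.2.trans ih

lemma FrontSeq.subset_limFront (hFS : FrontSeq Tmax μ F) (i : ℕ) :
    F i ⊆ limFront Tmax F :=
  fun s hs => ⟨(hFS i).2.2.1 hs, i, s, hs, List.prefix_refl s⟩

lemma isTree_limFront (hT : IsTree Tmax) : IsTree (limFront Tmax F) := by
  rintro s t hst ⟨htT, i, u, hu, htu⟩
  exact ⟨hT s t hst htT, i, u, hu, hst.trans htu⟩

lemma cldn_subset_limFront (hT : IsTree Tmax) (hFS : FrontSeq Tmax μ F) (n : ℕ) :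
    cldn (F n) ⊆ limFront Tmax F := by
  rintro t ⟨s, hs, hts⟩
  exact isTree_limFront hT t s hts (hFS.subset_limFront n hs)

lemma FrontSeq.exists_extension (hFS : FrontSeq Tmax μ F) {t : List ℕ}
    (ht : t ∈ limFront Tmax F) (i : ℕ) : ∃ j, i ≤ j ∧ ∃ s ∈ F j, t <+: s := by
  obtain ⟨-, j, s, hs, hts⟩ := ht
  obtain ⟨s', hs', hss'⟩ := (hFS.purelyStronger (le_max_right i j)).2 s hs
  exact ⟨max i j, le_max_left i j, s', hs', hts.trans hss'⟩

lemma FrontSeq.exists_comparable (hFS : FrontSeq Tmax μ F) {t : List ℕ}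
    (ht : t ∈ limFront Tmax F) (i : ℕ) : ∃ w ∈ F i, w <+: t ∨ t <+: w := by
  obtain ⟨j, hij, s, hs, hts⟩ := hFS.exists_extension ht i
  obtain ⟨w, hw, hws⟩ := (hFS.purelyStronger hij).1 s hs
  exact ⟨w, hw, List.prefix_or_prefix_of_prefix hws hts⟩

lemma FrontSeq.limFront_subset (hFS : FrontSeq Tmax μ F) {T : ℕ → Set (List ℕ)}
    (hT : ∀ i, IsTree (T i)) (hdec : ∀ i, T (i + 1) ⊆ T i) (hFT : ∀ i, F i ⊆ T i) (i : ℕ) :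
    limFront Tmax F ⊆ T i := by
  intro t ht
  obtain ⟨j, hij, s, hs, hts⟩ := hFS.exists_extension ht i
  exact hT i t s hts (antitone_nat_of_succ_le hdec hij (hFT j hs))

lemma FrontSeq.exists_mem_branch_lt_normOf (hT : IsTree Tmax)
    (hmono : ∀ t : List ℕ, ∀ A B : Set (List ℕ), A ⊆ B → μ t A ≤ μ t B)
    (hFS : FrontSeq Tmax μ F) {b : Set (List ℕ)} (hb : IsBranch (limFront Tmax F) b)
    (n : ℕ) :
    ∃ t ∈ b, (n : ℝ) < normOf μ (limFront Tmax F) t := by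
  have hL := isTree_limFront (F := F) hT
  obtain ⟨hfin, hne, -⟩ := hFS (n + 1)
  obtain ⟨w, hwb, hwF⟩ := hb.exists_mem_of_finite hL (hFS.subset_limFront (n + 1)) hfin hne
    fun t ht => hFS.exists_comparable ht (n + 1)
  obtain ⟨F', -, -, hcover, hnorm⟩ := (hFS n).2.2.2.2.1
  obtain ⟨t, htF', htw⟩ := hcover w hwF
  exact ⟨t, hb.mem_of_prefix_s6 hL hwb htw,
    (hnorm t htF').trans_le (normOf_mono hmono (cldn_subset_limFront hT hFS (n + 1)) t)⟩

end FrontSeq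

end Sacch

open Sacch in
/-- Fusion: if `(T i)` is a decreasing sequence in `Q` and `(F n)` is a
front-sequence with `F i` a front of `T i` for all `i`, then
`lim(F̄) ∈ Q` and `lim(F̄) ⊆ T i` for all `i`. -/
theorem fusion (Tmax : Set (List ℕ)) (μ : List ℕ → Set (List ℕ) → ℝ)
    (h : LimSupForcing Tmax μ) (T : ℕ → Set (List ℕ)) (F : ℕ → Set (List ℕ))
    (hQ : ∀ i, memQ Tmax μ (T i)) (hdec : ∀ i, T (i + 1) ⊆ T i)
    (hFS : FrontSeq Tmax μ F) (hfr : ∀ i, IsFront (T i) (F i)) :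
    memQ Tmax μ (limFront Tmax F) ∧ ∀ i, limFront Tmax F ⊆ T i :=
  ⟨⟨(hFS 0).2.1.mono (hFS.subset_limFront 0), fun _ ht => ht.1, isTree_limFront h.tree,
      fun _ hb => branchLimsupInf_of_forall_exists_lt hb.1
        (hFS.exists_mem_branch_lt_normOf h.tree h.mono hb)⟩,
    hFS.limFront_subset (fun i => (hQ i).2.2.1) hdec fun i => (hfr i).1⟩
end

section
/- Let Q be a finitely splitting lim-sup tree forcing. If F̄ = (F_n) is a front-sequence, then there exists exactly one T ∈ Q such that F_n is a front of T for all n, namely T = lim(F̄) = {t ∈ T_max : ∃i ∃s ∈ F_i, t ≼ s} = {t ∈ T_max : ∀i ∃s ∈ F_i, t comparable with s}. -/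
namespace Sacch

lemma prefix_antisymm {a b : List ℕ} (h1 : a <+: b) (h2 : b <+: a) : a = b :=
  h1.eq_of_length (le_antisymm h1.length_le h2.length_le)

lemma prefixes_finite (t : List ℕ) : {u : List ℕ | u <+: t}.Finite := by
  refine Set.Finite.subset t.inits.toFinset.finite_toSet fun u hu => ?_
  simpa [List.mem_inits] using hu

lemma antichain_eq {A : Set (List ℕ)} (hA : IsAntichainIn A) {u v : List ℕ}
    (hu : u ∈ A) (hv : v ∈ A) (huv : u <+: v) : u = v := by
  by_contra hne
  exact hA u hu v hv hne (Or.inl huv)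

section Aux

variable {Tmax : Set (List ℕ)} {μ : List ℕ → Set (List ℕ) → ℝ} {F : ℕ → Set (List ℕ)}

lemma front_down (hFS : FrontSeq Tmax μ F) {i k : ℕ} (hik : i ≤ k) :
    ∀ t ∈ F k, ∃ s ∈ F i, s <+: t := by
  induction k, hik using Nat.le_induction with
  | base => exact fun t ht => ⟨t, ht, List.prefix_refl t⟩
  | succ k hk ih =>
    intro t ht
    obtain ⟨w, hw, hwt⟩ := (hFS k).2.2.2.2.2.1 t ht
    obtain ⟨s, hs, hsw⟩ := ih w hw
    exact ⟨s, hs, hsw.trans hwt⟩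

lemma front_up (hFS : FrontSeq Tmax μ F) {i k : ℕ} (hik : i ≤ k) :
    ∀ s ∈ F i, ∃ t ∈ F k, s <+: t := by
  induction k, hik using Nat.le_induction with
  | base => exact fun s hs => ⟨s, hs, List.prefix_refl s⟩
  | succ k hk ih =>
    intro s hs
    obtain ⟨w, hw, hsw⟩ := ih s hs
    obtain ⟨t, ht, hwt⟩ := (hFS k).2.2.2.2.2.2 w hw
    exact ⟨t, ht, hsw.trans hwt⟩

lemma front_step (hFS : FrontSeq Tmax μ F) {j k : ℕ} {u : List ℕ}
    (hjk : j < k) (hj : u ∈ F j) (hk : u ∈ F k) : u ∈ F (j + 1) := by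
  obtain ⟨w, hw, hwu⟩ := front_down hFS hjk u hk
  obtain ⟨v, hv, hvw⟩ := (hFS j).2.2.2.2.2.1 w hw
  have hvu : v = u := antichain_eq (hFS j).2.2.2.1 hv hj (hvw.trans hwu)
  subst hvu
  have hweq : w = v := prefix_antisymm hwu hvw
  exact hweq ▸ hw

lemma front_interval (hFS : FrontSeq Tmax μ F) {j k : ℕ} {u : List ℕ}
    (hj : u ∈ F j) (hk : u ∈ F k) : ∀ i, j ≤ i → i ≤ k → u ∈ F i := by
  intro i hji hik
  induction i, hji using Nat.le_induction with
  | base => exact hj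
  | succ i hji ih =>
    have hi : u ∈ F i := ih (le_trans (Nat.le_succ i) hik)
    exact front_step hFS (Nat.lt_of_succ_le hik) hi hk

lemma cldn_sub (hFS : FrontSeq Tmax μ F) (hT : IsTree Tmax) (m : ℕ) :
    cldn (F m) ⊆ Tmax := by
  rintro x ⟨s, hs, hxs⟩
  exact hT x s hxs ((hFS m).2.2.1 hs)

/-- Each node belongs to only finitely many fronts. -/
lemma mem_fronts_finite (h : LimSupForcing Tmax μ) (hFS : FrontSeq Tmax μ F)
    (u : List ℕ) : {k | u ∈ F k}.Finite := by
  by_contra hinf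
  have hinf : {k | u ∈ F k}.Infinite := hinf
  obtain ⟨j₀, hj₀⟩ := hinf.nonempty
  obtain ⟨B, hB⟩ :=
    ((prefixes_finite u).image (fun t' => μ t' (succs Tmax t'))).bddAbove
  obtain ⟨k₁, hk₁⟩ := exists_nat_ge B
  set k := max k₁ j₀ with hkdef
  obtain ⟨k', hk'S, hkk'⟩ := hinf.exists_gt (k + 1)
  have huk1 : u ∈ F (k + 1) :=
    front_interval hFS hj₀ hk'S (k + 1) (by omega) (by omega)
  obtain ⟨F', hF'sub, hF'anti, hF'front, hF'norm⟩ := (hFS k).2.2.2.2.1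
  obtain ⟨t', ht'F', ht'u⟩ := hF'front u huk1
  have h1 : (k : ℝ) < normOf μ (cldn (F (k + 1))) t' := hF'norm t' ht'F'
  have h2 : normOf μ (cldn (F (k + 1))) t' ≤ μ t' (succs Tmax t') := by
    apply h.mono
    rintro x ⟨hx1, kk, hkk⟩
    exact ⟨cldn_sub hFS h.tree (k + 1) hx1, kk, hkk⟩
  have h3 : μ t' (succs Tmax t') ≤ B := hB ⟨t', ht'u, rfl⟩
  have h4 : (k₁ : ℝ) ≤ (k : ℝ) := Nat.cast_le.mpr (le_max_left k₁ j₀)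
  linarith

lemma lim_sub : limFront Tmax F ⊆ Tmax := fun _ ht => ht.1

lemma lim_tree (h : LimSupForcing Tmax μ) : IsTree (limFront Tmax F) := by
  rintro s t hst ⟨htT, i, u, hu, htu⟩
  exact ⟨h.tree s t hst htT, i, u, hu, hst.trans htu⟩

lemma front_mem_lim (hFS : FrontSeq Tmax μ F) {n : ℕ} {s : List ℕ}
    (hs : s ∈ F n) : s ∈ limFront Tmax F :=
  ⟨(hFS n).2.2.1 hs, n, s, hs, List.prefix_refl s⟩

lemma cldn_sub_lim (hFS : FrontSeq Tmax μ F) (hT : IsTree Tmax) (m : ℕ) :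
    cldn (F m) ⊆ limFront Tmax F := by
  rintro x ⟨s, hs, hxs⟩
  exact ⟨cldn_sub hFS hT m ⟨s, hs, hxs⟩, m, s, hs, hxs⟩

lemma lim_nonempty (hFS : FrontSeq Tmax μ F) : (limFront Tmax F).Nonempty := by
  obtain ⟨s, hs⟩ := (hFS 0).2.1
  exact ⟨s, front_mem_lim hFS hs⟩

/-- A node of `T` comparable with everything in a branch belongs to the branch. -/
lemma branch_mem {T b : Set (List ℕ)} (hb : IsBranch T b) {x : List ℕ} (hx : x ∈ T)
    (hcomp : ∀ u ∈ b, u <+: x ∨ x <+: u) : x ∈ b := by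
  have hchain : IsChainIn T (insert x b) := by
    constructor
    · rintro y (rfl | hy)
      · exact hx
      · exact hb.1.1 hy
    · rintro s (rfl | hs) t (rfl | htm)
      · exact Or.inl (List.prefix_refl _)
      · exact (hcomp t htm).symm
      · exact hcomp s hs
      · exact hb.1.2 s hs t htm
  have := hb.2 _ hchain (Set.subset_insert x b)
  rw [← this]
  exact Set.mem_insert x b

lemma branch_root {T b : Set (List ℕ)} (hT : IsTree T) (hne : T.Nonempty)
    (hb : IsBranch T b) : ([] : List ℕ) ∈ b := by
  obtain ⟨t, ht⟩ := hne
  exact branch_mem hb (hT [] t (List.nil_prefix) ht)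
    (fun u _ => Or.inr (List.nil_prefix))

lemma chain_bdd_finite {T b : Set (List ℕ)} (hb : IsChainIn T b) (L : ℕ)
    (hbd : ∀ u ∈ b, u.length ≤ L) : b.Finite := by
  apply Set.Finite.of_finite_image (f := List.length)
  · refine (Set.finite_Iic L).subset ?_
    rintro _ ⟨u, hu, rfl⟩
    exact hbd u hu
  · intro u hu v hv hlen
    rcases hb.2 u hu v hv with h | h
    · exact h.eq_of_length hlen
    · exact (h.eq_of_length hlen.symm).symm

lemma chain_top {T b : Set (List ℕ)} (hb : IsChainIn T b) (L : ℕ)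
    (hbd : ∀ u ∈ b, u.length ≤ L) (hne : b.Nonempty) :
    ∃ t ∈ b, ∀ u ∈ b, u <+: t := by
  obtain ⟨t, ht, hmax⟩ :=
    (chain_bdd_finite hb L hbd).exists_maximalFor List.length b hne
  refine ⟨t, ht, fun u hu => ?_⟩
  rcases hb.2 u hu t ht with h | h
  · exact h
  · have he : t = u := h.eq_of_length (le_antisymm h.length_le (hmax hu h.length_le))
    rw [he]

/-- Every branch of the limit tree meets every front. -/
lemma branch_meets (h : LimSupForcing Tmax μ) (hFS : FrontSeq Tmax μ F) (n : ℕ)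
    {b : Set (List ℕ)} (hb : IsBranch (limFront Tmax F) b) : ∃ v ∈ b, v ∈ F n := by
  obtain ⟨L, hL⟩ : ∃ L : ℕ, ∀ s ∈ F n, s.length ≤ L := by
    obtain ⟨L, hL⟩ := ((hFS n).1.image List.length).bddAbove
    exact ⟨L, fun s hs => hL ⟨s, hs, rfl⟩⟩
  by_cases hcase : ∃ t ∈ b, L < t.length
  · obtain ⟨t, htb, htL⟩ := hcase
    obtain ⟨htT, i, s, hsF, hts⟩ := hb.1.1 htb
    have hni : n ≤ i := by
      by_contra hni
      push_neg at hni
      obtain ⟨s', hs', hss'⟩ := front_up hFS hni.le s hsF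
      have : t.length ≤ L := le_trans (hts.length_le.trans hss'.length_le) (hL s' hs')
      omega
    obtain ⟨v, hv, hvs⟩ := front_down hFS hni s hsF
    have hvt : v <+: t := by
      rcases List.prefix_or_prefix_of_prefix hvs hts with hh | hh
      · exact hh
      · have : t.length ≤ L := hh.length_le.trans (hL v hv)
        omega
    have hvb : v ∈ b := by
      refine branch_mem hb (front_mem_lim hFS hv) fun u hu => ?_
      rcases hb.1.2 u hu t htb with h1 | h1
      · exact List.prefix_or_prefix_of_prefix h1 hvt
      · exact Or.inr (hvt.trans h1)
    exact ⟨v, hvb, hv⟩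
  · push_neg at hcase
    have hne : b.Nonempty := ⟨[], branch_root (lim_tree h) (lim_nonempty hFS) hb⟩
    obtain ⟨t, htb, htop⟩ := chain_top hb.1 L hcase hne
    obtain ⟨htT, i, s, hsF, hts⟩ := hb.1.1 htb
    have hsb : s ∈ b :=
      branch_mem hb (front_mem_lim hFS hsF) fun u hu => Or.inl ((htop u hu).trans hts)
    have hst : t ∈ F i := (prefix_antisymm (htop s hsb) hts) ▸ hsF
    by_cases hni : n ≤ i
    · obtain ⟨v, hv, hvt⟩ := front_down hFS hni t hst
      have hvb : v ∈ b :=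
        branch_mem hb (front_mem_lim hFS hv)
          (fun u hu => List.prefix_or_prefix_of_prefix (htop u hu) hvt)
      exact ⟨v, hvb, hv⟩
    · push_neg at hni
      have climb : ∀ j, i ≤ j → t ∈ F j := by
        intro j hij
        induction j, hij using Nat.le_induction with
        | base => exact hst
        | succ j hij ih =>
          obtain ⟨w, hw, htw⟩ := (hFS j).2.2.2.2.2.2 t ih
          have hwb : w ∈ b :=
            branch_mem hb (front_mem_lim hFS hw)
              (fun u hu => Or.inl ((htop u hu).trans htw))
          exact (prefix_antisymm (htop w hwb) htw) ▸ hw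
      exact ⟨t, htb, climb n hni.le⟩

lemma exists_branch {T c : Set (List ℕ)} (hc : IsChainIn T c) :
    ∃ b, c ⊆ b ∧ IsBranch T b := by
  obtain ⟨m, hcm, hm⟩ := zorn_subset_nonempty {b | IsChainIn T b}
    (fun C hCsub hCchain _ => by
      refine ⟨⋃₀ C, ⟨?_, ?_⟩, fun s hs => Set.subset_sUnion_of_mem hs⟩
      · rintro x ⟨A, hA, hxA⟩
        exact (hCsub hA).1 hxA
      · rintro s ⟨A, hA, hsA⟩ t ⟨B, hB, htB⟩
        rcases eq_or_ne A B with rfl | hAB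
        · exact (hCsub hA).2 s hsA t htB
        · rcases hCchain hA hB hAB with hsub | hsub
          · exact (hCsub hB).2 s (hsub hsA) t htB
          · exact (hCsub hA).2 s hsA t (hsub htB)) c hc
  refine ⟨m, hcm, hm.1, fun b' hb' hmb' => ?_⟩
  exact Set.Subset.antisymm (hm.2 hb' hmb') hmb'

end Aux

end Sacch

open Sacch in
/-- For a front-sequence `F̄` there is exactly one `T ∈ Q` such that every
`F n` is a front of `T`, namely `T = lim(F̄)`, which is also equal to
`{t ∈ Tmax : ∀ i ∃ s ∈ F i, t comparable with s}`. -/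
theorem limFront_unique (Tmax : Set (List ℕ)) (μ : List ℕ → Set (List ℕ) → ℝ)
    (h : LimSupForcing Tmax μ) (F : ℕ → Set (List ℕ))
    (hFS : FrontSeq Tmax μ F) :
    memQ Tmax μ (limFront Tmax F) ∧
    (∀ n : ℕ, IsFront (limFront Tmax F) (F n)) ∧
    (∀ T, memQ Tmax μ T → (∀ n : ℕ, IsFront T (F n)) → T = limFront Tmax F) ∧
    limFront Tmax F = {t | t ∈ Tmax ∧ ∀ i : ℕ, ∃ s ∈ F i, t <+: s ∨ s <+: t} := by
  refine ⟨⟨lim_nonempty hFS, lim_sub, lim_tree h, ?limsup⟩, ?fronts, ?uniq, ?eq⟩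
  case limsup =>
    intro b hb m N
    have hSfin : {u ∈ b | u.length < N}.Finite := by
      apply Set.Finite.of_finite_image (f := List.length)
      · refine (Set.finite_Iio N).subset ?_
        rintro _ ⟨u, hu, rfl⟩
        exact hu.2
      · intro u hu v hv hlen
        rcases hb.1.2 u hu.1 v hv.1 with hh | hh
        · exact hh.eq_of_length hlen
        · exact (hh.eq_of_length hlen.symm).symm
    obtain ⟨B, hB⟩ := (hSfin.image (fun u => μ u (succs Tmax u))).bddAbove
    obtain ⟨n, hn⟩ := exists_nat_ge (max m B)
    obtain ⟨s, hsb, hsF⟩ := branch_meets h hFS (n + 1) hb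
    obtain ⟨F', hF'sub, hF'anti, hF'front, hF'norm⟩ := (hFS n).2.2.2.2.1
    obtain ⟨t', ht'F', ht's⟩ := hF'front s hsF
    have ht'lim : t' ∈ limFront Tmax F :=
      cldn_sub_lim hFS h.tree (n + 1) ⟨s, hsF, ht's⟩
    have ht'b : t' ∈ b := by
      refine branch_mem hb ht'lim fun u hu => ?_
      rcases hb.1.2 u hu s hsb with h1 | h1
      · exact List.prefix_or_prefix_of_prefix h1 ht's
      · exact Or.inr (ht's.trans h1)
    have hnorm1 : (n : ℝ) < normOf μ (cldn (F (n + 1))) t' := hF'norm t' ht'F'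
    have hmono : normOf μ (cldn (F (n + 1))) t' ≤ normOf μ (limFront Tmax F) t' := by
      apply h.mono
      rintro x ⟨hx1, kk, hkk⟩
      exact ⟨cldn_sub_lim hFS h.tree (n + 1) hx1, kk, hkk⟩
    have hbig : m < normOf μ (limFront Tmax F) t' := by
      have : m ≤ (n : ℝ) := (le_max_left m B).trans hn
      linarith
    refine ⟨t', ht'b, ?_, hbig⟩
    by_contra hlen
    push_neg at hlen
    have h3 : μ t' (succs Tmax t') ≤ B := hB ⟨t', ⟨ht'b, hlen⟩, rfl⟩
    have h2 : normOf μ (cldn (F (n + 1))) t' ≤ μ t' (succs Tmax t') := by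
      apply h.mono
      rintro x ⟨hx1, kk, hkk⟩
      exact ⟨cldn_sub hFS h.tree (n + 1) hx1, kk, hkk⟩
    have : B ≤ (n : ℝ) := (le_max_right m B).trans hn
    linarith
  case fronts =>
    intro n
    refine ⟨fun s hs => front_mem_lim hFS hs, (hFS n).2.2.2.1, fun b hb => ?_⟩
    obtain ⟨v, hvb, hvF⟩ := branch_meets h hFS n hb
    exact ⟨v, hvb, hvF⟩
  case uniq =>
    intro T hT hfr
    apply Set.Subset.antisymm
    · intro t ht
      have hchain : IsChainIn T {u | u <+: t} := by
        refine ⟨fun u hu => hT.2.2.1 u t hu ht, fun u hu v hv => ?_⟩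
        exact List.prefix_or_prefix_of_prefix hu hv
      obtain ⟨b, hsubb, hb⟩ := exists_branch hchain
      have htb : t ∈ b := hsubb (List.prefix_refl t)
      have hPfin : {u ∈ b | u.length ≤ t.length}.Finite :=
        chain_bdd_finite ⟨fun u hu => hb.1.1 hu.1,
          fun u hu v hv => hb.1.2 u hu.1 v hv.1⟩ t.length (fun u hu => hu.2)
      have hKfin : (⋃ u ∈ {u ∈ b | u.length ≤ t.length}, {k | u ∈ F k}).Finite :=
        hPfin.biUnion (fun u _ => mem_fronts_finite h hFS u)
      obtain ⟨k, hk⟩ := hKfin.infinite_compl.nonempty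
      obtain ⟨s, hsb, hsF⟩ := (hfr k).2.2 b hb
      have hlen : t.length < s.length := by
        by_contra hh
        push_neg at hh
        exact hk (Set.mem_biUnion (⟨hsb, hh⟩ : s ∈ {u ∈ b | u.length ≤ t.length}) hsF)
      have hts : t <+: s := by
        rcases hb.1.2 t htb s hsb with h1 | h1
        · exact h1
        · have := h1.length_le; omega
      exact ⟨hT.2.1 ht, k, s, hsF, hts⟩
    · rintro t ⟨htT, i, s, hsF, hts⟩
      exact hT.2.2.1 t s hts ((hfr i).1 hsF)
  case eq =>
    ext t
    constructor
    · rintro ⟨htT, i, s, hsF, hts⟩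
      refine ⟨htT, fun j => ?_⟩
      rcases le_or_gt i j with hij | hij
      · obtain ⟨s', hs', hss'⟩ := front_up hFS hij s hsF
        exact ⟨s', hs', Or.inl (hts.trans hss')⟩
      · obtain ⟨v, hv, hvs⟩ := front_down hFS hij.le s hsF
        exact ⟨v, hv, List.prefix_or_prefix_of_prefix hts hvs⟩
    · rintro ⟨htT, hall⟩
      have hKfin : (⋃ u ∈ {u : List ℕ | u <+: t}, {k | u ∈ F k}).Finite :=
        (prefixes_finite t).biUnion (fun u _ => mem_fronts_finite h hFS u)
      obtain ⟨i, hi⟩ := hKfin.infinite_compl.nonempty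
      obtain ⟨s, hsF, hcomp⟩ := hall i
      have hts : t <+: s := by
        rcases hcomp with h1 | h1
        · exact h1
        · exact (hi (Set.mem_biUnion (show s ∈ {u : List ℕ | u <+: t} from h1) hsF)).elim
      exact ⟨htT, i, s, hsF, hts⟩
end

section
/- Let Q be a finitely splitting lim-sup tree forcing. For every T ∈ Q there is a strictly increasing f : ω → ω such that T has full splitting with respect to f: for all n ∈ ω and all t ∈ T of length f(n+1), there is s ≼ t of length at least f(n) with μ_T(s) > n. -/
namespace Sacch

/-- `t` is a splitting node of `T`: it has at least two immediate successors
in `T`. -/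
def SplitNode (T : Set (List ℕ)) (t : List ℕ) : Prop :=
  ∃ s₁ ∈ succs T t, ∃ s₂ ∈ succs T t, s₁ ≠ s₂

/-- `T ∈ Q^f_A`: `T ∈ Q` and every splitting node of `T` has length in an
interval `[f n, f (n+1) - 1]` with `n ∈ A`. -/
def memQfA (Tmax : Set (List ℕ)) (μ : List ℕ → Set (List ℕ) → ℝ)
    (f : ℕ → ℕ) (A : Set ℕ) (T : Set (List ℕ)) : Prop :=
  memQ Tmax μ T ∧
    ∀ t ∈ T, SplitNode T t → ∃ n ∈ A, f n ≤ t.length ∧ t.length < f (n + 1)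

/-- `T` has full splitting with respect to `f`: for all `n` and all `t ∈ T`
of length `f (n+1)` there is `s ≼ t` of length at least `f n` with
`μ_T(s) > n`. -/
def FullSplit (μ : List ℕ → Set (List ℕ) → ℝ) (T : Set (List ℕ))
    (f : ℕ → ℕ) : Prop :=
  ∀ n : ℕ, ∀ t ∈ T, t.length = f (n + 1) →
    ∃ s, s <+: t ∧ f n ≤ s.length ∧ (n : ℝ) < normOf μ T s

end Sacch

/-!
Fix `n` and a level `N`. The nodes `t ∈ T` such that no `s ≼ t` of length `≥ N` has
`μ_T(s) > n` form a finitely splitting subtree of `T`. If it had nodes of every length,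
Kőnig's lemma would give a branch of `T` along which `μ_T ≤ n` from level `N` on, against
`limsup = ∞`. So its nodes have bounded length, and `f (n + 1)` is chosen beyond that bound
for `N = f n`.
-/

namespace Sacch

theorem FinSplit.mono {T T' : Set (List ℕ)} (h : FinSplit T') (hTT' : T ⊆ T') :
    FinSplit T := fun t ht =>
  (h t (hTT' ht)).subset fun _ ⟨hs, hst⟩ => ⟨hTT' hs, hst⟩

theorem IsTree.exists_seq_of_unbounded {B : Set (List ℕ)} (hB : IsTree B) (hfin : FinSplit B)
    (hunb : ∀ n, ∃ t ∈ B, n ≤ t.length) :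
    ∃ c : ℕ → List ℕ, (∀ n, c n ∈ B ∧ (c n).length = n) ∧ ∀ i j, i ≤ j → c i <+: c j := by
  let α : ℕ → Type := fun i => {t : List ℕ // t ∈ B ∧ t.length = i}
  let π : {i j : ℕ} → i ≤ j → α j → α i := fun {i _} hij t =>
    ⟨t.1.take i, hB _ _ (List.take_prefix _ _) t.2.1, by simp [t.2.2, hij]⟩
  have : Finite (α 0) := by
    have : Subsingleton (α 0) := ⟨fun a b => Subtype.ext <| by
      rw [List.length_eq_zero_iff.mp a.2.2, List.length_eq_zero_iff.mp b.2.2]⟩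
    infer_instance
  have : ∀ i, Nonempty (α i) := fun i => by
    obtain ⟨t, ht, hlen⟩ := hunb i
    exact ⟨π hlen ⟨t, ht, rfl⟩⟩
  obtain ⟨f, hf⟩ := exists_seq_forall_proj_of_forall_finite π
    (fun _ t => Subtype.ext (List.take_of_length_le t.2.2.le))
    (fun _ _ _ hij _ t => Subtype.ext (by simp [π, List.take_take, min_eq_left hij]))
    (fun i a => by
      refine ((hfin a.1 a.2.1).preimage Subtype.val_injective.injOn).subset ?_
      rintro t rfl
      refine ⟨t.2.1, t.1[i]'(by simp [t.2.2]), ?_⟩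
      conv_lhs => rw [← List.take_of_length_le t.2.2.le]
      simp [π, List.take_add_one])
  refine ⟨fun i => (f i).1, fun i => (f i).2, fun i j hij => ?_⟩
  simp only [← hf hij]
  exact List.take_prefix _ _

theorem isBranch_range {T : Set (List ℕ)} {c : ℕ → List ℕ} (hcT : ∀ n, c n ∈ T)
    (hlen : ∀ n, (c n).length = n) (hc : ∀ i j, i ≤ j → c i <+: c j) :
    IsBranch T (Set.range c) := by
  have hchain : IsChainIn T (Set.range c) := by
    refine ⟨Set.range_subset_iff.mpr hcT, ?_⟩
    rintro _ ⟨i, rfl⟩ _ ⟨j, rfl⟩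
    exact (le_total i j).imp (hc i j) (hc j i)
  refine ⟨hchain, fun b' hb' hcb' => (Set.Subset.antisymm · hcb') ?_⟩
  intro t ht
  refine ⟨t.length, ?_⟩
  rcases hb'.2 t ht _ (hcb' ⟨t.length, rfl⟩) with h | h
  · exact (h.eq_of_length_le (hlen _).le).symm
  · exact h.eq_of_length_le (hlen _).ge

theorem exists_length_forall_exists_prefix_norm_gt {μ : List ℕ → Set (List ℕ) → ℝ}
    {T : Set (List ℕ)} (hT : IsTree T) (hfin : FinSplit T)
    (hlim : ∀ b, IsBranch T b → BranchLimsupInf μ T b) (n N : ℕ) :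
    ∃ L, N < L ∧ ∀ t ∈ T, t.length = L →
      ∃ s, s <+: t ∧ N ≤ s.length ∧ (n : ℝ) < normOf μ T s := by
  let B : Set (List ℕ) := {t | t ∈ T ∧ ∀ s, s <+: t → N ≤ s.length → normOf μ T s ≤ n}
  have hBT : B ⊆ T := fun _ ht => ht.1
  have hB : IsTree B := fun s t hst ⟨htT, ht⟩ =>
    ⟨hT s t hst htT, fun r hrs => ht r (hrs.trans hst)⟩
  obtain ⟨L, hL⟩ : ∃ L, ∀ t ∈ B, t.length < L := by
    by_contra! hunb
    obtain ⟨c, hcB, hc⟩ := hB.exists_seq_of_unbounded (hfin.mono hBT) hunb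
    obtain ⟨_, ⟨i, rfl⟩, hNi, hnorm⟩ :=
      hlim _ (isBranch_range (fun i => hBT (hcB i).1) (fun i => (hcB i).2) hc) n N
    exact (hcB i).1.2 _ List.prefix_rfl hNi |>.not_gt hnorm
  refine ⟨max L (N + 1), by omega, fun t ht hlen => ?_⟩
  by_contra! hbad
  have := hL t ⟨ht, hbad⟩
  omega

end Sacch

open Sacch in
/-- For every `T ∈ Q` there is a strictly increasing `f : ω → ω` such that
`T` has full splitting with respect to `f`. -/
theorem exists_fullSplit (Tmax : Set (List ℕ)) (μ : List ℕ → Set (List ℕ) → ℝ)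
    (h : LimSupForcing Tmax μ) (T : Set (List ℕ)) (hT : memQ Tmax μ T) :
    ∃ f : ℕ → ℕ, StrictMono f ∧ FullSplit μ T f := by
  obtain ⟨-, hTTmax, hTtree, hlim⟩ := hT
  choose L hNL hL using fun n N =>
    exists_length_forall_exists_prefix_norm_gt hTtree (h.finSplit.mono hTTmax) hlim n N
  let f : ℕ → ℕ := fun n => Nat.rec 0 (fun k fk => L k fk) n
  have hf_succ : ∀ n, f (n + 1) = L n (f n) := fun _ => rfl
  refine ⟨f, strictMono_nat_of_lt_succ fun n => ?_, fun n t ht hlen => ?_⟩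
  · exact hf_succ n ▸ hNL n (f n)
  · exact hL n (f n) t ht (hlen.trans (hf_succ n))
end

section
/- Define a norm μ on finite sets by: a node t is given M_t^{m_t} immediate successors where M_t := (2·m_t)^{m_t} and m_t is the number of previously constructed nodes, and for A ⊆ SUCC(t), μ(A) := log_{M_t}(|A|/M_t + 1). Then μ satisfies: 0 ≤ μ(A) < m_t; μ(A) = 0 iff A = ∅; μ is strictly monotone; μ is sub-additive (μ(A∪B) ≤ μ(A) + μ(B)); if |B| ≥ |A|/M_t then μ(B) > μ(A) − 1; and if |B| ≤ m_t then μ(B) < 1/m_t. -/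
/-- The norm of the strongly non-homogeneous forcing: with `M = (2m)^m`,
`μ(A) = log_M (|A| / M + 1)`. -/
noncomputable def sacNorm (m : ℕ) (A : Finset ℕ) : ℝ :=
  Real.logb ((2 * m : ℝ) ^ m) ((A.card : ℝ) / ((2 * m : ℝ) ^ m) + 1)

/-!
With `M = (2m)^m`, `μ(A) = f(|A|)` for `f(x) = log_M (x / M + 1)`, so every property is a fact
about `f` on `[0, ∞)`. Sub-additivity comes from `(x + y) / M + 1 ≤ (x / M + 1) (y / M + 1)`,
the bound `μ(B) > μ(A) - 1` from `M (y / M + 1) = y + M`, and the bound `μ(B) < 1/m` for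
`|B| ≤ m` from `(|B| / M + 1)^m < 2^m ≤ M`.
-/

open Real

noncomputable def shiftedLogb (M x : ℝ) : ℝ :=
  logb M (x / M + 1)

section shiftedLogb

variable {M x y : ℝ}

@[simp]
theorem shiftedLogb_zero (M : ℝ) : shiftedLogb M 0 = 0 := by
  simp [shiftedLogb]

theorem div_add_one_pos (hM : 0 < M) (hx : 0 ≤ x) : 0 < x / M + 1 := by
  positivity

theorem shiftedLogb_pos (hM : 1 < M) (hx : 0 < x) : 0 < shiftedLogb M x :=
  logb_pos hM (lt_add_of_pos_left 1 (div_pos hx (by linarith)))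

theorem shiftedLogb_nonneg (hM : 1 < M) (hx : 0 ≤ x) : 0 ≤ shiftedLogb M x :=
  logb_nonneg hM (le_add_of_nonneg_left (div_nonneg hx (by linarith)))

theorem shiftedLogb_lt_shiftedLogb (hM : 1 < M) (hx : 0 ≤ x) (hxy : x < y) :
    shiftedLogb M x < shiftedLogb M y :=
  logb_lt_logb hM (div_add_one_pos (by linarith) hx) (by gcongr)

theorem shiftedLogb_eq_zero_iff (hM : 1 < M) (hx : 0 ≤ x) : shiftedLogb M x = 0 ↔ x = 0 := by
  refine ⟨fun h => ?_, fun h => h ▸ shiftedLogb_zero M⟩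
  by_contra hne
  exact (shiftedLogb_pos hM (lt_of_le_of_ne hx (Ne.symm hne))).ne' h

theorem shiftedLogb_le_shiftedLogb (hM : 1 < M) (hx : 0 ≤ x) (hxy : x ≤ y) :
    shiftedLogb M x ≤ shiftedLogb M y :=
  logb_le_logb_of_le hM (div_add_one_pos (by linarith) hx) (by gcongr)

theorem shiftedLogb_add_le (hM : 1 < M) (hx : 0 ≤ x) (hy : 0 ≤ y) :
    shiftedLogb M (x + y) ≤ shiftedLogb M x + shiftedLogb M y := by
  have hM0 : 0 < M := by linarith
  have hprod : (x + y) / M + 1 ≤ (x / M + 1) * (y / M + 1) := by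
    have : 0 ≤ x / M * (y / M) := by positivity
    rw [add_div]
    nlinarith
  calc shiftedLogb M (x + y) ≤ logb M ((x / M + 1) * (y / M + 1)) :=
        logb_le_logb_of_le hM (div_add_one_pos hM0 (add_nonneg hx hy)) hprod
    _ = shiftedLogb M x + shiftedLogb M y :=
        logb_mul (div_add_one_pos hM0 hx).ne' (div_add_one_pos hM0 hy).ne'

theorem sub_one_lt_shiftedLogb (hM : 1 < M) (hx : 0 ≤ x) (hxy : x / M ≤ y) :
    shiftedLogb M x - 1 < shiftedLogb M y := by
  have hM0 : 0 < M := by linarith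
  have hy : 0 ≤ y := (div_nonneg hx hM0.le).trans hxy
  have hlt : x / M + 1 < (y / M + 1) * M := by
    rw [add_mul, div_mul_cancel₀ y hM0.ne', one_mul]
    linarith
  calc shiftedLogb M x - 1 < logb M ((y / M + 1) * M) - 1 :=
        sub_lt_sub_right (logb_lt_logb hM (div_add_one_pos hM0 hx) hlt) 1
    _ = shiftedLogb M y := by
        rw [logb_mul (div_add_one_pos hM0 hy).ne' hM0.ne', logb_self_eq_one hM,
          add_sub_cancel_right, shiftedLogb]

theorem shiftedLogb_lt_of_le_pow (hM : 2 < M) {n : ℕ} (hn : n ≠ 0) (hx : 0 ≤ x)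
    (hxn : x ≤ M ^ n) : shiftedLogb M x < n := by
  have hM0 : 0 < M := by linarith
  have hMn : M ≤ M ^ n := le_self_pow₀ (by linarith) hn
  -- `x + M ≤ M ^ n + M < M ^ n * M`, as `M ≤ M ^ n` and `2 < M`.
  have hlt : x / M + 1 < M ^ n := by
    rw [div_add_one hM0.ne', div_lt_iff₀ hM0]
    nlinarith
  calc shiftedLogb M x < logb M (M ^ n) :=
        logb_lt_logb (by linarith) (div_add_one_pos hM0 hx) hlt
    _ = n := by rw [logb_pow, logb_self_eq_one (by linarith), mul_one]

theorem shiftedLogb_lt_one_div_of_pow_lt (hM : 1 < M) (hx : 0 ≤ x) {n : ℕ} (hn : n ≠ 0)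
    (hpow : (x / M + 1) ^ n < M) : shiftedLogb M x < 1 / n := by
  have hn0 : (0 : ℝ) < n := by positivity
  have h := logb_lt_logb hM (pow_pos (div_add_one_pos (by linarith) hx) n) hpow
  rw [logb_pow, logb_self_eq_one hM] at h
  rw [lt_div_iff₀ hn0, mul_comm]
  exact h

end shiftedLogb

theorem sacNorm_eq_shiftedLogb (m : ℕ) (A : Finset ℕ) :
    sacNorm m A = shiftedLogb ((2 * m : ℝ) ^ m) A.card :=
  rfl

theorem two_mul_le_sacBase {m : ℕ} (hm : 1 ≤ m) : (2 * m : ℝ) ≤ (2 * m : ℝ) ^ m :=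
  le_self_pow₀ (by norm_cast; omega) (by omega)

theorem sacBase_pow_div_add_one_lt {m : ℕ} (hm : 2 ≤ m) {x : ℝ} (hx : 0 ≤ x)
    (hxm : x ≤ m) : (x / (2 * m : ℝ) ^ m + 1) ^ m < (2 * m : ℝ) ^ m := by
  have hmR : (2 : ℝ) ≤ m := by exact_mod_cast hm
  have hbase := two_mul_le_sacBase (m := m) (by omega)
  have hsmall : x / (2 * m : ℝ) ^ m < 1 := by
    rw [div_lt_one (by positivity)]
    linarith
  exact pow_lt_pow_left₀ (by linarith) (by positivity) (by omega)

/-- Properties of the norm `μ(A) = log_M (|A|/M + 1)` with `M = (2m)^m`, on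
subsets of a successor set of size `M^m`: `0 ≤ μ(A) < m`; `μ(A) = 0` iff
`A = ∅`; strict monotonicity; sub-additivity; `|B| ≥ |A|/M` implies
`μ(B) > μ(A) − 1`; and `|B| ≤ m` implies `μ(B) < 1/m`. -/
theorem sacNorm_properties (m : ℕ) (hm : 2 ≤ m) :
    (∀ A : Finset ℕ, A.card ≤ ((2 * m) ^ m) ^ m →
      0 ≤ sacNorm m A ∧ sacNorm m A < m) ∧
    (∀ A : Finset ℕ, sacNorm m A = 0 ↔ A = ∅) ∧
    (∀ A B : Finset ℕ, A ⊂ B → sacNorm m A < sacNorm m B) ∧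
    (∀ A B : Finset ℕ, sacNorm m (A ∪ B) ≤ sacNorm m A + sacNorm m B) ∧
    (∀ A B : Finset ℕ, (A.card : ℝ) / ((2 * m : ℝ) ^ m) ≤ (B.card : ℝ) →
      sacNorm m A - 1 < sacNorm m B) ∧
    (∀ B : Finset ℕ, B.card ≤ m → sacNorm m B < 1 / (m : ℝ)) := by
  have hM : 2 < (2 * m : ℝ) ^ m := by
    have : (4 : ℝ) ≤ 2 * m := by norm_cast; omega
    linarith [two_mul_le_sacBase (m := m) (by omega)]
  have hM1 : 1 < (2 * m : ℝ) ^ m := by linarith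
  simp only [sacNorm_eq_shiftedLogb]
  refine ⟨fun A hA => ⟨shiftedLogb_nonneg hM1 A.card.cast_nonneg,
      shiftedLogb_lt_of_le_pow hM (by omega) A.card.cast_nonneg (by exact_mod_cast hA)⟩,
    fun A => by
      rw [shiftedLogb_eq_zero_iff hM1 A.card.cast_nonneg, Nat.cast_eq_zero, Finset.card_eq_zero],
    fun A B hAB => shiftedLogb_lt_shiftedLogb hM1 A.card.cast_nonneg
      (by exact_mod_cast Finset.card_lt_card hAB),
    fun A B => ?_,
    fun A B hAB => sub_one_lt_shiftedLogb hM1 A.card.cast_nonneg hAB,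
    fun B hB => shiftedLogb_lt_one_div_of_pow_lt hM1 B.card.cast_nonneg (by omega)
      (sacBase_pow_div_add_one_lt hm B.card.cast_nonneg (by exact_mod_cast hB))⟩
  calc shiftedLogb _ ((A ∪ B).card) ≤ shiftedLogb _ ((A.card : ℝ) + B.card) :=
        shiftedLogb_le_shiftedLogb hM1 (Nat.cast_nonneg _)
          (by exact_mod_cast Finset.card_union_le A B)
      _ ≤ _ := shiftedLogb_add_le hM1 A.card.cast_nonneg B.card.cast_nonneg
end
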